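/- arXiv:1411.3235 — 2 statements merged into one kernel-verified Lean document; each statement's English description precedes it below -/
import Mathlib

section
/- Let Γ be a subgroup of the group of affine transformations of a real vector space V = Λ ⊗ ℝ (Λ a lattice), containing the group of translations by Λ as a subgroup with finite quotient, and set Λ' := ker(α_L : Γ → GL(V)) where α_L sends an affine transformation to its linear part. Then Λ' is a maximal abelian, normal, finite-index subgroup of Γ, and any subgroup Λ'' of Γ with these three properties equals Λ'. -/
section Aux

variable {V : Type} [AddCommGroup V] [Module ℝ V]

private lemma lin_fix_of_comm (γ : V ≃ᵃ[ℝ] V) (v : V)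
    (h : γ * AffineEquiv.constVAdd ℝ V v = AffineEquiv.constVAdd ℝ V v * γ) :
    γ.linear v = v := by
  have h0 := congrArg (fun e : V ≃ᵃ[ℝ] V => e (0 : V)) h
  simp only [AffineEquiv.coe_mul, Function.comp_apply, AffineEquiv.constVAdd_apply] at h0
  have h1 : γ (v +ᵥ (0 : V)) = γ.linear v +ᵥ γ 0 := γ.map_vadd 0 v
  rw [h1] at h0
  exact vadd_right_cancel (γ (0 : V)) h0

private lemma linHom_eq_one (γ : V ≃ᵃ[ℝ] V) (S : Set V)
    (hS : Submodule.span ℝ S = ⊤)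
    (h : ∀ v ∈ S, γ * AffineEquiv.constVAdd ℝ V v = AffineEquiv.constVAdd ℝ V v * γ) :
    AffineEquiv.linearHom γ = 1 := by
  have hle : Submodule.span ℝ S ≤ LinearMap.eqLocus (γ.linear : V →ₗ[ℝ] V) LinearMap.id :=
    Submodule.span_le.2 fun v hv => lin_fix_of_comm γ v (h v hv)
  rw [hS] at hle
  have hfix : ∀ v : V, γ.linear v = v := fun v => (hle (Submodule.mem_top)).trans rfl
  ext v
  exact hfix v

private lemma apply_eq_vadd (γ : V ≃ᵃ[ℝ] V) (h : AffineEquiv.linearHom γ = 1) (x : V) :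
    γ x = x +ᵥ γ 0 := by
  have hl : γ.linear x = x := by
    have := congrArg (fun e : V ≃ₗ[ℝ] V => e x) h
    simpa using this
  calc γ x = γ (x +ᵥ (0 : V)) := by rw [vadd_eq_add, add_zero]
    _ = γ.linear x +ᵥ γ 0 := γ.map_vadd 0 x
    _ = x +ᵥ γ 0 := by rw [hl]

private lemma comm_of_ker (a b : V ≃ᵃ[ℝ] V)
    (ha : AffineEquiv.linearHom a = 1) (hb : AffineEquiv.linearHom b = 1) :
    a * b = b * a := by
  ext x
  simp only [AffineEquiv.coe_mul, Function.comp_apply]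
  rw [apply_eq_vadd a ha (b x), apply_eq_vadd b hb x, apply_eq_vadd b hb (a x),
    apply_eq_vadd a ha x]
  simp only [vadd_eq_add]
  abel

private lemma constVAdd_pow (v : V) (n : ℕ) :
    AffineEquiv.constVAdd ℝ V v ^ n = AffineEquiv.constVAdd ℝ V (n • v) :=
  (AffineEquiv.constVAdd_nsmul (k := ℝ) (P₁ := V) n v).symm

end Aux

/-- **Unique determination of the translation lattice.**
Let `V = Λ ⊗ ℝ` be a real vector space spanned by a lattice `Λ`, and let `Γ` be a subgroup of
the group of affine transformations of `V` containing the translations by `Λ` as a subgroup of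
finite index.  Let `Λ' := ker(α_L : Γ → GL(V))`, where `α_L` sends an affine transformation to
its linear part.  Then `Λ'` is a maximal abelian, normal, finite-index subgroup of `Γ`, and any
subgroup `Λ''` of `Γ` with these three properties equals `Λ'`. -/
theorem translation_lattice_unique
    (V : Type) [AddCommGroup V] [Module ℝ V]
    (Λ : AddSubgroup V) (hspan : Submodule.span ℝ (Λ : Set V) = ⊤)
    (Γ : Subgroup (V ≃ᵃ[ℝ] V))
    (htrans : ∀ v ∈ Λ, AffineEquiv.constVAdd ℝ V v ∈ Γ)
    (hfin : (Subgroup.closure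
        {γ : Γ | ∃ v ∈ Λ, (γ : V ≃ᵃ[ℝ] V) = AffineEquiv.constVAdd ℝ V v}).index ≠ 0) :
    let Λ' : Subgroup Γ :=
      Subgroup.comap ((AffineEquiv.linearHom : (V ≃ᵃ[ℝ] V) →* V ≃ₗ[ℝ] V).comp Γ.subtype) ⊥
    -- `Λ'` is normal, abelian, of finite index, and maximal abelian
    Λ'.Normal ∧
    (∀ a b : Γ, a ∈ Λ' → b ∈ Λ' → a * b = b * a) ∧
    Λ'.index ≠ 0 ∧
    (∀ H : Subgroup Γ, (∀ a b : Γ, a ∈ H → b ∈ H → a * b = b * a) → Λ' ≤ H → H = Λ') ∧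
    -- uniqueness: any subgroup with these properties coincides with `Λ'`
    (∀ Λ'' : Subgroup Γ, Λ''.Normal →
      (∀ a b : Γ, a ∈ Λ'' → b ∈ Λ'' → a * b = b * a) →
      Λ''.index ≠ 0 →
      (∀ H : Subgroup Γ, (∀ a b : Γ, a ∈ H → b ∈ H → a * b = b * a) → Λ'' ≤ H → H = Λ'') →
      Λ'' = Λ') := by
  intro Λ'
  -- membership criterion
  have hmem : ∀ γ : Γ, γ ∈ Λ' ↔ AffineEquiv.linearHom (γ : V ≃ᵃ[ℝ] V) = 1 := by
    intro γ
    simp [Λ', Subgroup.mem_comap]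
  -- translations by Λ are in Λ'
  have htv : ∀ (v : V) (hv : v ∈ Λ),
      (⟨AffineEquiv.constVAdd ℝ V v, htrans v hv⟩ : Γ) ∈ Λ' := by
    intro v hv
    rw [hmem]
    ext w
    simp
  -- normal
  have hnormal : Λ'.Normal := by
    have : Λ' = ((AffineEquiv.linearHom : (V ≃ᵃ[ℝ] V) →* V ≃ₗ[ℝ] V).comp Γ.subtype).ker := rfl
    rw [this]
    exact MonoidHom.normal_ker _
  -- abelian
  have habelian : ∀ a b : Γ, a ∈ Λ' → b ∈ Λ' → a * b = b * a := by
    intro a b ha hb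
    rw [hmem] at ha hb
    exact Subtype.ext (comm_of_ker _ _ ha hb)
  -- finite index
  have hindex : Λ'.index ≠ 0 := by
    have hle : (Subgroup.closure
        {γ : Γ | ∃ v ∈ Λ, (γ : V ≃ᵃ[ℝ] V) = AffineEquiv.constVAdd ℝ V v}) ≤ Λ' := by
      rw [Subgroup.closure_le]
      rintro γ ⟨v, hv, hγ⟩
      rw [SetLike.mem_coe, hmem, hγ]
      ext w
      simp
    intro h0
    exact hfin (Nat.eq_zero_of_zero_dvd (h0 ▸ Subgroup.index_dvd_of_le hle))
  -- key: commuting with translations from a spanning set forces membership in Λ'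
  have hkey : ∀ (γ : Γ) (S : Set V), Submodule.span ℝ S = ⊤ →
      (∀ v ∈ S, (γ : V ≃ᵃ[ℝ] V) * AffineEquiv.constVAdd ℝ V v
        = AffineEquiv.constVAdd ℝ V v * (γ : V ≃ᵃ[ℝ] V)) → γ ∈ Λ' := by
    intro γ S hS h
    rw [hmem]
    exact linHom_eq_one _ S hS h
  -- maximal abelian
  have hmax : ∀ H : Subgroup Γ, (∀ a b : Γ, a ∈ H → b ∈ H → a * b = b * a) → Λ' ≤ H → H = Λ' := by
    intro H hab hle
    refine le_antisymm ?_ hle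
    intro γ hγ
    refine hkey γ (Λ : Set V) hspan ?_
    intro v hv
    have ht : (⟨AffineEquiv.constVAdd ℝ V v, htrans v hv⟩ : Γ) ∈ H := hle (htv v hv)
    have := hab γ ⟨AffineEquiv.constVAdd ℝ V v, htrans v hv⟩ hγ ht
    exact congrArg (Subtype.val) this
  refine ⟨hnormal, habelian, hindex, hmax, ?_⟩
  -- uniqueness
  intro Λ'' hnorm'' hab'' hind'' hmax''
  -- the set of lattice vectors whose translation lies in Λ''
  set W : AddSubgroup V :=
    { carrier := {v : V | ∃ hv : v ∈ Λ, (⟨AffineEquiv.constVAdd ℝ V v, htrans v hv⟩ : Γ) ∈ Λ''}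
      zero_mem' := by
        refine ⟨Λ.zero_mem, ?_⟩
        have : (⟨AffineEquiv.constVAdd ℝ V 0, htrans 0 Λ.zero_mem⟩ : Γ) = 1 := by
          ext x; simp
        rw [this]; exact Λ''.one_mem
      add_mem' := by
        rintro x y ⟨hx, hx'⟩ ⟨hy, hy'⟩
        refine ⟨Λ.add_mem hx hy, ?_⟩
        have : (⟨AffineEquiv.constVAdd ℝ V (x + y), htrans _ (Λ.add_mem hx hy)⟩ : Γ)
            = ⟨AffineEquiv.constVAdd ℝ V x, htrans x hx⟩ *
              ⟨AffineEquiv.constVAdd ℝ V y, htrans y hy⟩ := by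
          ext w; simp [AffineEquiv.mul_def, add_assoc]
        rw [this]; exact Λ''.mul_mem hx' hy'
      neg_mem' := by
        rintro x ⟨hx, hx'⟩
        refine ⟨Λ.neg_mem hx, ?_⟩
        have : (⟨AffineEquiv.constVAdd ℝ V (-x), htrans _ (Λ.neg_mem hx)⟩ : Γ)
            = (⟨AffineEquiv.constVAdd ℝ V x, htrans x hx⟩)⁻¹ := by
          ext w; simp [AffineEquiv.inv_def, ← AffineEquiv.constVAdd_symm]
        rw [this]; exact Λ''.inv_mem hx' } with hW
  -- W spans V
  have hWspan : Submodule.span ℝ (W : Set V) = ⊤ := by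
    rw [eq_top_iff, ← hspan, Submodule.span_le]
    intro v hv
    have hvΛ : v ∈ Λ := hv
    -- pass to the finite quotient Γ ⧸ Λ''
    haveI : Finite (Γ ⧸ Λ'') := Nat.finite_of_card_ne_zero hind''
    set g : Γ := ⟨AffineEquiv.constVAdd ℝ V v, htrans v hvΛ⟩ with hg
    set n : ℕ := orderOf (QuotientGroup.mk g : Γ ⧸ Λ'') with hn
    have hnpos : 0 < n := orderOf_pos _
    have hgn : g ^ n ∈ Λ'' := by
      have : (QuotientGroup.mk g : Γ ⧸ Λ'') ^ n = 1 := pow_orderOf_eq_one _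
      rwa [← QuotientGroup.mk_pow, QuotientGroup.eq_one_iff] at this
    have hWn : (n : ℕ) • v ∈ W := by
      refine ⟨Λ.nsmul_mem hvΛ n, ?_⟩
      have hcoe : (⟨AffineEquiv.constVAdd ℝ V ((n : ℕ) • v),
          htrans _ (Λ.nsmul_mem hvΛ n)⟩ : Γ) = g ^ n := by
        apply Subtype.ext
        show AffineEquiv.constVAdd ℝ V ((n : ℕ) • v) = ((g ^ n : Γ) : V ≃ᵃ[ℝ] V)
        rw [← constVAdd_pow, SubmonoidClass.coe_pow]
      rw [hcoe]; exact hgn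
    have hmem' : ((n : ℝ)) • v ∈ Submodule.span ℝ (W : Set V) := by
      rw [Nat.cast_smul_eq_nsmul]; exact Submodule.subset_span hWn
    have h2 := Submodule.smul_mem _ ((n : ℝ)⁻¹) hmem'
    rwa [smul_smul, inv_mul_cancel₀ (by exact_mod_cast hnpos.ne'), one_smul] at h2
  -- Λ'' ≤ Λ'
  have hle : Λ'' ≤ Λ' := by
    intro γ hγ
    refine hkey γ (W : Set V) hWspan ?_
    rintro v ⟨hvΛ, hv''⟩
    have := hab'' γ ⟨AffineEquiv.constVAdd ℝ V v, htrans v hvΛ⟩ hγ hv''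
    exact congrArg Subtype.val this
  exact (hmax'' Λ' habelian hle).symm
end

section
/- Let G be a group with presentation G = F/R, F a free group. Then there is a natural isomorphism H₂(G, ℤ) ≅ (R ∩ [F,F]) / [F,R], where [F,R] is the subgroup generated by commutators f r f^{-1} r^{-1} with f ∈ F, r ∈ R. -/
/-! Group homology `H₂(G, ℤ)` with trivial `ℤ`-coefficients, defined via the standard
(inhomogeneous) bar resolution, and Hopf's formula `H₂(G, ℤ) ≅ (R ∩ [F,F]) / [F,R]`
for a presentation `G = F/R` with `F` free. -/

/-- The group of `n`-chains of the bar complex of `G`: the free `ℤ`-module on `Gⁿ`. -/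
abbrev barChains (G : Type) [Group G] (n : ℕ) : Type := (Fin n → G) →₀ ℤ

/-- The `j`-th face map of the bar complex. -/
def barFace {G : Type} [Group G] {n : ℕ} (j : ℕ) (g : Fin (n + 1) → G) : Fin n → G :=
  fun i =>
    if i.val + 1 < j then g i.castSucc
    else if i.val + 1 = j then g i.castSucc * g i.succ
    else g i.succ

/-- The bar differential `d : C_{n+1}(G) → C_n(G)`. -/
noncomputable def barDiff (G : Type) [Group G] (n : ℕ) :
    barChains G (n + 1) →ₗ[ℤ] barChains G n :=
  (Finsupp.lift (barChains G n) ℤ (Fin (n + 1) → G))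
    (fun g => ∑ j ∈ Finset.range (n + 2), Finsupp.single (barFace j g) ((-1 : ℤ) ^ j))

/-- The second group homology `H₂(G, ℤ) = ker (d : C₂ → C₁) / im (d : C₃ → C₂)`. -/
abbrev H2 (G : Type) [Group G] : Type :=
  LinearMap.ker (barDiff G 1) ⧸
    Submodule.comap (LinearMap.ker (barDiff G 1)).subtype (LinearMap.range (barDiff G 2))

/-!
Let `M = C₂(G)/B₂(G)` be the bar 2-chains of `G = F/R` modulo boundaries. The classes `[g|h]`
form a 2-cocycle of `G` with values in `M`, hence define a central extension `M ↣ E ↠ G`, and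
freeness of `F` lifts `F ↠ G` to `Φ : F → E`. On `R`, `Φ` is a homomorphism to `M` which kills
`[F,R]` because `M` is central, and on `R ∩ [F,F]` it takes values in the cycles
`ker (∂ : M → C₁) ≅ H₂(G)`, because `e ↦ ∂(fiber e) + [base e] - [1]` is additive
on `E`.

Choose a section `s` of `F ↠ G` with `s 1 = 1` and let `ρ(g,h) = s(g) s(h) s(gh)⁻¹ ∈ R`.
Then `Φ(ρ(g,h)) = [g|h]` up to a correction that is linear in `∂[g|h]`, and the image of
`ρ(g,h)` in `F^ab` is likewise linear in `∂[g|h]`; so a cycle `z` is hit by a product of factor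
sets lying in `[F,F]`. Conversely `[g|h] ↦ ρ(g,h)` induces `M → R/[F,R]`, and the defect
between `Φ` followed by this map and `w ↦ w s(w̄)⁻¹` is a homomorphism from `F` to an abelian
group; it vanishes on `[F,F]`, so `x ∈ R ∩ [F,F]` with `Φ x = 1` lies in `[F,R]`.
-/

open scoped commutatorElement

namespace Hopf

lemma mul_comm_of_commutator_le {H : Type*} [Group H] {N : Subgroup H} [N.Normal]
    (h : commutator H ≤ N) (a b : H ⧸ N) : a * b = b * a := by
  induction a using QuotientGroup.induction_on with | H a =>
  induction b using QuotientGroup.induction_on with | H b =>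
  rw [← QuotientGroup.mk_mul, ← QuotientGroup.mk_mul, QuotientGroup.eq]
  have hab : (a * b)⁻¹ * (b * a) = ⁅b⁻¹, a⁻¹⁆ := by
    rw [commutatorElement_def]
    group
  rw [hab]
  exact h (Subgroup.commutator_mem_commutator (Subgroup.mem_top _) (Subgroup.mem_top _))

lemma commutator_le_subgroupOf {H : Type*} [Group H] (R : Subgroup H) :
    commutator ↥R ≤ (⁅(⊤ : Subgroup H), R⁆).subgroupOf R := by
  rw [commutator_def, Subgroup.commutator_le]
  intro p _ q _
  rw [Subgroup.mem_subgroupOf]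
  exact Subgroup.commutator_mem_commutator (Subgroup.mem_top _) q.2

lemma mk_conj_eq_mk {H : Type*} [Group H] {R : Subgroup H} (w : H) (r : ↥R)
    (hw : w * r * w⁻¹ ∈ R) :
    ((⟨w * r * w⁻¹, hw⟩ : ↥R) : ↥R ⧸ (⁅(⊤ : Subgroup H), R⁆).subgroupOf R) =
      (r : ↥R ⧸ (⁅(⊤ : Subgroup H), R⁆).subgroupOf R) := by
  rw [QuotientGroup.eq, Subgroup.mem_subgroupOf]
  convert Subgroup.commutator_mem_commutator (Subgroup.mem_top w) (inv_mem r.2) using 1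
  simp [commutatorElement_def, mul_assoc]

section BarComplex

variable {G : Type} [Group G]

lemma barDiff_one_single (g : Fin 2 → G) (c : ℤ) :
    barDiff G 1 (Finsupp.single g c) =
      Finsupp.single ![g 1] c - Finsupp.single ![g 0 * g 1] c + Finsupp.single ![g 0] c := by
  have h0 : barFace 0 g = ![g 1] := by funext i; fin_cases i; simp [barFace]
  have h1 : barFace 1 g = ![g 0 * g 1] := by funext i; fin_cases i; simp [barFace]
  have h2 : barFace 2 g = ![g 0] := by funext i; fin_cases i; simp [barFace]
  simp [barDiff, Finset.sum_range_succ, h0, h1, h2, sub_eq_add_neg]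

lemma barDiff_two_single (g : Fin 3 → G) (c : ℤ) :
    barDiff G 2 (Finsupp.single g c) =
      Finsupp.single ![g 1, g 2] c - Finsupp.single ![g 0 * g 1, g 2] c
        + Finsupp.single ![g 0, g 1 * g 2] c - Finsupp.single ![g 0, g 1] c := by
  have h0 : barFace 0 g = ![g 1, g 2] := by funext i; fin_cases i <;> simp [barFace]
  have h1 : barFace 1 g = ![g 0 * g 1, g 2] := by funext i; fin_cases i <;> simp [barFace]
  have h2 : barFace 2 g = ![g 0, g 1 * g 2] := by funext i; fin_cases i <;> simp [barFace]
  have h3 : barFace 3 g = ![g 0, g 1] := by funext i; fin_cases i <;> simp [barFace]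
  simp [barDiff, Finset.sum_range_succ, h0, h1, h2, h3, sub_eq_add_neg]

lemma barDiff_one_comp_barDiff_two : barDiff G 1 ∘ₗ barDiff G 2 = 0 := by
  refine Finsupp.lhom_ext fun g c => ?_
  rw [LinearMap.comp_apply, barDiff_two_single]
  simp only [map_add, map_sub, barDiff_one_single]
  simp only [Matrix.cons_val_zero, Matrix.cons_val_one, Matrix.cons_val_fin_one, mul_assoc,
    LinearMap.zero_apply]
  abel

abbrev BarQuot (G : Type) [Group G] : Type := barChains G 2 ⧸ LinearMap.range (barDiff G 2)

noncomputable def barClass (g h : G) : BarQuot G :=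
  Submodule.Quotient.mk (Finsupp.single ![g, h] 1)

lemma mk_single_eq_barClass (g : Fin 2 → G) :
    (Submodule.Quotient.mk (Finsupp.single g 1) : BarQuot G) = barClass (g 0) (g 1) := by
  rw [barClass]
  congr
  funext i
  fin_cases i <;> rfl

lemma barClass_cocycle (g h k : G) :
    barClass h k + barClass g (h * k) = barClass (g * h) k + barClass g h := by
  have hb : (Submodule.Quotient.mk (barDiff G 2 (Finsupp.single ![g, h, k] 1)) : BarQuot G) = 0 :=
    (Submodule.Quotient.mk_eq_zero _).2 ⟨_, rfl⟩
  simp only [barDiff_two_single, Submodule.Quotient.mk_add, Submodule.Quotient.mk_sub] at hb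
  rw [← sub_eq_zero, ← hb]
  simp only [barClass, Matrix.cons_val_zero, Matrix.cons_val_one, Matrix.cons_val]
  abel

lemma barClass_one_left (h : G) : barClass 1 h = barClass (1 : G) 1 := by
  simpa using barClass_cocycle 1 1 h

lemma barClass_one_right (g : G) : barClass g 1 = barClass (1 : G) 1 := by
  simpa [add_comm] using (barClass_cocycle g 1 1).symm

lemma barClass_inv_self (g : G) : barClass g⁻¹ g = barClass g g⁻¹ := by
  simpa [barClass_one_left, barClass_one_right, add_comm] using barClass_cocycle g g⁻¹ g

noncomputable def barDiffQuot (G : Type) [Group G] : BarQuot G →ₗ[ℤ] barChains G 1 :=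
  Submodule.liftQ _ (barDiff G 1) (LinearMap.range_le_ker_iff.2 barDiff_one_comp_barDiff_two)

lemma barDiffQuot_barClass (g h : G) :
    barDiffQuot G (barClass g h) =
      Finsupp.single ![h] 1 - Finsupp.single ![g * h] 1 + Finsupp.single ![g] 1 := by
  simp [barDiffQuot, barClass, barDiff_one_single]

noncomputable def h2EquivKerBarDiffQuot : H2 G ≃ₗ[ℤ] LinearMap.ker (barDiffQuot G) :=
  (Submodule.quotEquivOfEq _ _ (by rw [LinearMap.ker_comp, Submodule.ker_mkQ])).trans <|
    (LinearMap.quotKerEquivRange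
      ((LinearMap.range (barDiff G 2)).mkQ ∘ₗ (LinearMap.ker (barDiff G 1)).subtype)).trans <|
    LinearEquiv.ofEq _ _ <| by
      rw [LinearMap.range_comp, Submodule.range_subtype, barDiffQuot, Submodule.ker_liftQ]

end BarComplex

section Extension

variable {G : Type} [Group G]

-- Normalized so that the identity of `BarExtension G` is `⟨1, 0⟩`.
noncomputable def barCocycle (g h : G) : BarQuot G := barClass g h - barClass 1 1

lemma barCocycle_cocycle (g h k : G) :
    barCocycle h k + barCocycle g (h * k) = barCocycle (g * h) k + barCocycle g h := by
  simp only [barCocycle]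
  linear_combination (norm := abel) barClass_cocycle g h k

@[simp] lemma barCocycle_one_left (h : G) : barCocycle 1 h = 0 := by
  rw [barCocycle, barClass_one_left, sub_self]

@[simp] lemma barCocycle_one_right (g : G) : barCocycle g 1 = 0 := by
  rw [barCocycle, barClass_one_right, sub_self]

lemma barCocycle_inv_self (g : G) : barCocycle g⁻¹ g = barCocycle g g⁻¹ := by
  rw [barCocycle, barCocycle, barClass_inv_self]

lemma barDiffQuot_barCocycle (g h : G) :
    barDiffQuot G (barCocycle g h) = Finsupp.single ![h] 1 - Finsupp.single ![g * h] 1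
      + Finsupp.single ![g] 1 - Finsupp.single ![1] 1 := by
  simp only [barCocycle, map_sub, barDiffQuot_barClass, one_mul]
  abel

@[ext]
structure BarExtension (G : Type) [Group G] where
  base : G
  fiber : BarQuot G

namespace BarExtension

noncomputable instance : Mul (BarExtension G) :=
  ⟨fun x y => ⟨x.base * y.base, x.fiber + y.fiber + barCocycle x.base y.base⟩⟩

noncomputable instance : One (BarExtension G) := ⟨⟨1, 0⟩⟩

noncomputable instance : Inv (BarExtension G) :=
  ⟨fun x => ⟨x.base⁻¹, -x.fiber - barCocycle x.base⁻¹ x.base⟩⟩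

@[simp] lemma mul_base (x y : BarExtension G) : (x * y).base = x.base * y.base := rfl

@[simp] lemma mul_fiber (x y : BarExtension G) :
    (x * y).fiber = x.fiber + y.fiber + barCocycle x.base y.base := rfl

@[simp] lemma one_base : (1 : BarExtension G).base = 1 := rfl

@[simp] lemma one_fiber : (1 : BarExtension G).fiber = 0 := rfl

@[simp] lemma inv_base (x : BarExtension G) : x⁻¹.base = x.base⁻¹ := rfl

@[simp] lemma inv_fiber (x : BarExtension G) :
    x⁻¹.fiber = -x.fiber - barCocycle x.base⁻¹ x.base := rfl

noncomputable instance : Group (BarExtension G) :=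
  Group.ofLeftAxioms
    (fun x y z => by
      ext
      · exact mul_assoc _ _ _
      · simp only [mul_fiber, mul_base]
        linear_combination (norm := abel) (barCocycle_cocycle x.base y.base z.base).symm)
    (fun x => by ext <;> simp)
    (fun x => by
      ext
      · exact inv_mul_cancel _
      · simp only [mul_fiber, inv_fiber, inv_base, one_fiber]
        abel)

def proj : BarExtension G →* G where
  toFun := base
  map_one' := rfl
  map_mul' _ _ := rfl

lemma commute_of_base_eq_one (x : BarExtension G) {y : BarExtension G} (hy : y.base = 1) :
    Commute x y := by
  ext <;> simp [hy, add_comm]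

noncomputable def toChains : BarExtension G →* Multiplicative (barChains G 1) where
  toFun x := .ofAdd (barDiffQuot G x.fiber + Finsupp.single ![x.base] 1 - Finsupp.single ![1] 1)
  map_one' := by simp
  map_mul' x y := by
    simp only [mul_fiber, mul_base, map_add, barDiffQuot_barCocycle, ← ofAdd_add]
    congr 1
    abel

end BarExtension

end Extension

section Presentation

variable {α : Type} (R : Subgroup (FreeGroup α)) [R.Normal]

local notation "F" => FreeGroup α
local notation "G" => F ⧸ R

noncomputable def extLift : F →* BarExtension G :=
  FreeGroup.lift fun a => ⟨FreeGroup.of a, 0⟩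

lemma extLift_base (w : F) : (extLift R w).base = w := by
  have h : BarExtension.proj.comp (extLift R) = QuotientGroup.mk' R :=
    FreeGroup.ext_hom _ _ fun _ => rfl
  exact DFunLike.congr_fun h w

lemma extLift_base_of_mem {r : F} (hr : r ∈ R) : (extLift R r).base = 1 := by
  rw [extLift_base, QuotientGroup.eq_one_iff]
  exact hr

lemma extLift_fiber_mul (u v : F) :
    (extLift R (u * v)).fiber =
      (extLift R u).fiber + (extLift R v).fiber + barCocycle (u : G) (v : G) := by
  rw [map_mul, BarExtension.mul_fiber, extLift_base, extLift_base]

lemma extLift_fiber_inv (v : F) :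
    (extLift R v⁻¹).fiber = -(extLift R v).fiber - barCocycle (v : G)⁻¹ (v : G) := by
  rw [map_inv, BarExtension.inv_fiber, extLift_base]

lemma extLift_eq_one_iff {r : F} (hr : r ∈ R) :
    extLift R r = 1 ↔ (extLift R r).fiber = 0 :=
  ⟨fun h => by rw [h]; rfl, fun h => BarExtension.ext (extLift_base_of_mem R hr) h⟩

lemma commutator_top_le_ker_extLift : ⁅(⊤ : Subgroup F), R⁆ ≤ (extLift R).ker := by
  rw [Subgroup.commutator_le]
  intro f _ r hr
  rw [MonoidHom.mem_ker, map_commutatorElement, commutatorElement_eq_one_iff_commute]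
  exact BarExtension.commute_of_base_eq_one _ (extLift_base_of_mem R hr)

noncomputable def relHom : ↥R →* Multiplicative (BarQuot G) where
  toFun r := .ofAdd (extLift R r).fiber
  map_one' := by simp
  map_mul' r s := by
    rw [Subgroup.coe_mul, map_mul, BarExtension.mul_fiber, extLift_base_of_mem R r.2,
      barCocycle_one_left, add_zero, ofAdd_add]

lemma barDiffQuot_extLift_fiber {x : F} (hxR : x ∈ R) (hx : x ∈ commutator F) :
    barDiffQuot G (extLift R x).fiber = 0 := by
  have h := Abelianization.commutator_subset_ker (BarExtension.toChains.comp (extLift R)) hx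
  simpa [BarExtension.toChains, extLift_base_of_mem R hxR] using h

noncomputable def hopfCycle :
    ↥(R ⊓ commutator F) →* Multiplicative (LinearMap.ker (barDiffQuot G)) where
  toFun x := .ofAdd ⟨(extLift R x).fiber, barDiffQuot_extLift_fiber R x.2.1 x.2.2⟩
  map_one' := by ext; simp
  map_mul' x y := congrArg Multiplicative.ofAdd <| Subtype.ext <|
    congrArg Multiplicative.toAdd ((relHom R).map_mul ⟨x, x.2.1⟩ ⟨y, y.2.1⟩)

noncomputable def hopfMap : ↥(R ⊓ commutator F) →* Multiplicative (H2 G) :=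
  (AddEquiv.toMultiplicative h2EquivKerBarDiffQuot.symm.toAddEquiv).toMonoidHom.comp (hopfCycle R)

lemma hopfMap_eq_one_iff (x : ↥(R ⊓ commutator F)) : hopfMap R x = 1 ↔ extLift R x = 1 := by
  rw [hopfMap, MonoidHom.comp_apply, MulEquiv.coe_toMonoidHom, MulEquiv.map_eq_one_iff,
    extLift_eq_one_iff R x.2.1]
  simp [hopfCycle, ← Subtype.val_inj]

-- `s 1 = 1` gives `factorSet R 1 1 = 1` and `relPart R r = r` for `r ∈ R`.
open Classical in
noncomputable def normSection (g : G) : F := if g = 1 then 1 else g.out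

lemma mk_normSection (g : G) : (normSection R g : G) = g := by
  unfold normSection
  split_ifs with h
  · rw [h, QuotientGroup.mk_one]
  · exact QuotientGroup.out_eq' g

lemma normSection_one : normSection R 1 = 1 := if_pos rfl

noncomputable def factorSet (g h : G) : ↥R :=
  ⟨normSection R g * normSection R h * (normSection R (g * h))⁻¹, by
    rw [← QuotientGroup.eq_one_iff]
    simp [mk_normSection]⟩

lemma extLift_factorSet_fiber (g h : G) :
    (extLift R (factorSet R g h)).fiber = barCocycle g h + (extLift R (normSection R g)).fiber
      + (extLift R (normSection R h)).fiber - (extLift R (normSection R (g * h))).fiber := by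
  simp only [factorSet, extLift_fiber_mul, extLift_fiber_inv, QuotientGroup.mk_mul,
    QuotientGroup.mk_inv, mk_normSection, barCocycle_inv_self]
  abel

noncomputable def sectionFiber : barChains G 1 →ₗ[ℤ] BarQuot G :=
  Finsupp.lift _ ℤ _ fun x => (extLift R (normSection R (x 0))).fiber - barClass 1 1

noncomputable def sectionAbel : barChains G 1 →ₗ[ℤ] Additive (Abelianization F) :=
  Finsupp.lift _ ℤ _ fun x => .ofMul (Abelianization.of (normSection R (x 0)))

lemma sectionFiber_single (g : G) :
    sectionFiber R (Finsupp.single ![g] 1) =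
      (extLift R (normSection R g)).fiber - barClass 1 1 := by
  simp [sectionFiber]

lemma sectionAbel_single (g : G) :
    sectionAbel R (Finsupp.single ![g] 1) = .ofMul (Abelianization.of (normSection R g)) := by
  simp [sectionAbel]

noncomputable def relFiberAbel : Additive ↥R →+ BarQuot G × Additive (Abelianization F) :=
  (MonoidHom.toAdditiveLeft (relHom R)).prod
    (MonoidHom.toAdditive (Abelianization.of.comp R.subtype))

lemma relFiberAbel_ofMul (r : ↥R) :
    relFiberAbel R (.ofMul r) = ((extLift R r).fiber, .ofMul (Abelianization.of (r : F))) :=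
  rfl

-- Both sides are additive in `z`; on a basis chain `[g|h]` the preimage is `ρ(g,h)`.
lemma mem_range_relFiberAbel (z : barChains G 2) :
    (Submodule.Quotient.mk z + sectionFiber R (barDiff G 1 z), sectionAbel R (barDiff G 1 z)) ∈
      (relFiberAbel R).range := by
  induction z using Finsupp.induction_linear with
  | zero =>
    simp only [map_zero, Submodule.Quotient.mk_zero, add_zero, Prod.mk_zero_zero]
    exact zero_mem _
  | add z w hz hw =>
    convert add_mem hz hw using 1
    simp only [map_add, Submodule.Quotient.mk_add, Prod.mk_add_mk]
    abel_nf
  | single g n =>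
    rw [← mul_one n, ← smul_eq_mul, ← Finsupp.smul_single]
    simp only [map_zsmul, Submodule.Quotient.mk_smul, ← smul_add, ← Prod.smul_mk]
    refine zsmul_mem (AddMonoidHom.mem_range.2 ⟨.ofMul (factorSet R (g 0) (g 1)), ?_⟩) n
    rw [relFiberAbel_ofMul, mk_single_eq_barClass, barDiff_one_single]
    simp only [map_add, map_sub, sectionFiber_single, sectionAbel_single,
      extLift_factorSet_fiber, Prod.mk.injEq]
    constructor
    · rw [barCocycle]
      abel
    · simp only [factorSet, map_mul, map_inv, ofMul_mul, ofMul_inv]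
      abel

lemma exists_fiber_eq_mk {z : barChains G 2} (hz : barDiff G 1 z = 0) :
    ∃ r ∈ R ⊓ commutator F, (extLift R r).fiber = Submodule.Quotient.mk z := by
  obtain ⟨r, hr⟩ := mem_range_relFiberAbel R z
  simp only [hz, map_zero, add_zero, relFiberAbel, AddMonoidHom.prod_apply, Prod.mk.injEq] at hr
  refine ⟨r.toMul, Subgroup.mem_inf.2 ⟨r.toMul.2, ?_⟩, hr.1⟩
  rw [← Abelianization.ker_of, MonoidHom.mem_ker]
  simpa using hr.2

lemma hopfMap_surjective : Function.Surjective (hopfMap R) := by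
  intro y
  set c := h2EquivKerBarDiffQuot y.toAdd
  obtain ⟨z, hz⟩ := Submodule.Quotient.mk_surjective _ c.1
  have hdz : barDiff G 1 z = 0 := by
    have hc := c.2
    rwa [LinearMap.mem_ker, ← hz, barDiffQuot, Submodule.liftQ_apply] at hc
  obtain ⟨r, hr, hfiber⟩ := exists_fiber_eq_mk R hdz
  have hcycle : hopfCycle R ⟨r, hr⟩ = .ofAdd c :=
    congrArg Multiplicative.ofAdd (Subtype.ext (hfiber.trans hz))
  exact ⟨⟨r, hr⟩, by simp [hopfMap, hcycle, c]⟩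

abbrev RelCoinvariants : Type := ↥R ⧸ (⁅(⊤ : Subgroup F), R⁆).subgroupOf R

noncomputable instance : CommGroup (RelCoinvariants R) where
  mul_comm := mul_comm_of_commutator_le (commutator_le_subgroupOf R)

lemma factorSet_cocycle (g h k : G) :
    (factorSet R g h * factorSet R (g * h) k : RelCoinvariants R) =
      factorSet R h k * factorSet R g (h * k) := by
  have hconj := Subgroup.Normal.conj_mem ‹R.Normal› _ (factorSet R h k).2 (normSection R g)
  rw [← mk_conj_eq_mk _ _ hconj, ← QuotientGroup.mk_mul, ← QuotientGroup.mk_mul]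
  congr 1
  ext
  simp [factorSet, mul_assoc]

lemma factorSet_one_one : factorSet R 1 1 = 1 := by
  ext
  simp [factorSet, normSection_one]

noncomputable def factorSetHom : BarQuot G →ₗ[ℤ] Additive (RelCoinvariants R) :=
  Submodule.liftQ _
    (Finsupp.lift _ ℤ _ fun g => .ofMul (factorSet R (g 0) (g 1) : RelCoinvariants R)) <| by
      refine LinearMap.range_le_ker_iff.2 (Finsupp.lhom_ext fun g c => ?_)
      have h := congrArg Additive.ofMul (factorSet_cocycle R (g 0) (g 1) (g 2))
      rw [ofMul_mul, ofMul_mul] at h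
      rw [← mul_one c, ← smul_eq_mul, ← Finsupp.smul_single, map_zsmul, LinearMap.comp_apply,
        barDiff_two_single, map_sub, map_add, map_sub]
      simp only [Finsupp.lift_apply, Finsupp.sum_single_index, one_smul, zero_smul,
        Matrix.cons_val_zero, Matrix.cons_val_one]
      refine (congrArg (c • ·) ?_).trans (smul_zero c)
      linear_combination (norm := abel) -h

lemma factorSetHom_barCocycle (g h : G) :
    factorSetHom R (barCocycle g h) = .ofMul (factorSet R g h : RelCoinvariants R) := by
  simp [factorSetHom, barCocycle, barClass, factorSet_one_one]

noncomputable def relPart (w : F) : ↥R :=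
  ⟨w * (normSection R w)⁻¹, by
    rw [← QuotientGroup.eq_one_iff]
    simp [mk_normSection]⟩

noncomputable def discrepancy : F →* RelCoinvariants R where
  toFun w := (factorSetHom R (extLift R w).fiber).toMul / relPart R w
  map_one' := by
    simp only [map_one, BarExtension.one_fiber, map_zero, toMul_zero, relPart, QuotientGroup.mk_one,
      normSection_one, inv_one, mul_one, one_div, inv_eq_one, QuotientGroup.eq_one_iff]
    exact Subgroup.mem_subgroupOf.2 (one_mem _)
  map_mul' u v := by
    have hconj := Subgroup.Normal.conj_mem ‹R.Normal› _ (relPart R v).2 (normSection R u)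
    have hrel : relPart R (u * v) = relPart R u * ⟨_, hconj⟩ * factorSet R u v := by
      ext
      simp [relPart, factorSet, mul_assoc]
    simp only [extLift_fiber_mul, map_add, factorSetHom_barCocycle, toMul_add, toMul_ofMul, hrel,
      QuotientGroup.mk_mul, mk_conj_eq_mk]
    rw [mul_div_mul_right_eq_div, mul_div_mul_comm]

lemma mem_of_extLift_eq_one {x : F} (hx : x ∈ R ⊓ commutator F) (h : extLift R x = 1) :
    x ∈ ⁅(⊤ : Subgroup F), R⁆ := by
  have hd := Abelianization.commutator_subset_ker (discrepancy R) hx.2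
  have hrel : relPart R x = ⟨x, hx.1⟩ := by
    ext
    simp [relPart, (QuotientGroup.eq_one_iff _).2 hx.1, normSection_one]
  rw [MonoidHom.mem_ker, discrepancy, MonoidHom.coe_mk, OneHom.coe_mk, h, BarExtension.one_fiber,
    map_zero, toMul_zero, hrel, one_div, inv_eq_one, QuotientGroup.eq_one_iff] at hd
  exact hd

lemma ker_hopfMap :
    (hopfMap R).ker = (⁅(⊤ : Subgroup F), R⁆).subgroupOf (R ⊓ commutator F) := by
  ext x
  rw [MonoidHom.mem_ker, hopfMap_eq_one_iff, Subgroup.mem_subgroupOf]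
  exact ⟨mem_of_extLift_eq_one R x.2, fun hx => commutator_top_le_ker_extLift R hx⟩

end Presentation

end Hopf

/-- **Hopf's formula.**  Let `G` be a group with a presentation `G = F/R`, `F` a free group.
Then there is a natural isomorphism `H₂(G, ℤ) ≅ (R ∩ [F,F]) / [F,R]`, where `[F,R]` is the
subgroup generated by the commutators `f r f⁻¹ r⁻¹` with `f ∈ F`, `r ∈ R`.
(The isomorphism is expressed by a surjective homomorphism `R ∩ [F,F] → H₂(G,ℤ)` whose
kernel is exactly `[F,R]`.) -/
theorem hopf_formula (α : Type) (R : Subgroup (FreeGroup α)) [R.Normal] :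
    ∃ φ : ↥(R ⊓ commutator (FreeGroup α)) →* Multiplicative (H2 (FreeGroup α ⧸ R)),
      Function.Surjective φ ∧
        MonoidHom.ker φ =
          (⁅(⊤ : Subgroup (FreeGroup α)), R⁆).subgroupOf (R ⊓ commutator (FreeGroup α)) :=
  ⟨Hopf.hopfMap R, Hopf.hopfMap_surjective R, Hopf.ker_hopfMap R⟩
end
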